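/- arXiv:2505.08087 — 2 statements merged into one kernel-verified Lean document; each statement's English description precedes it below -/
import Mathlib

section
/- Let φ : ℝ^d → ℝ^d be a C¹ diffeomorphism, let x ≠ y in ℝ^d, let γ := γ^φ_{x,y} be the pullback geodesic, L := ∫₀¹ ‖γ'(s)‖₂ ds its ℓ² arc length, and w := (L/‖log^φ_x(y)‖₂) · log^φ_x(y) the iso-logarithm of y at x. Then the scaling factor α := ‖log^φ_x(y)‖₂ / L satisfies the iso-exponential criterion: exp^φ_x(α·w) = y and the ℓ² arc length of the pullback geodesic from x to exp^φ_x(α·w) equals ‖w‖₂. In particular, the iso-exponential map exp^iso_x inverts the iso-logarithm: exp^iso_x(log^iso_x(y)) = y. -/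
/-!
The pullback logarithm `log^φ_x y = Dψ(φ x)[φ y - φ x]` is inverted by the pullback exponential,
since `Dφ x ∘ Dψ(φ x) = id` by the chain rule applied to `φ ∘ ψ = id`. Rescaling by `L / ‖log‖`
and back by `‖log‖ / L` changes nothing as long as both factors are finite and nonzero: the
logarithm is nonzero because `Dψ` is injective and `φ x ≠ φ y`, and the arc length `L` is positive
because the geodesic's velocity `Dψ(γ s)[φ y - φ x]` is continuous and never vanishes. Finally the
iso-logarithm has norm `L` by construction.
-/

open Function AffineMap

section Inverse

variable {𝕜 E F : Type*} [NontriviallyNormedField 𝕜] [NormedAddCommGroup E] [NormedSpace 𝕜 E]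
  [NormedAddCommGroup F] [NormedSpace 𝕜 F] {f : E → F} {g : F → E}

theorem leftInverse_fderiv_of_leftInverse (hfg : LeftInverse f g) {z : F}
    (hf : DifferentiableAt 𝕜 f (g z)) (hg : DifferentiableAt 𝕜 g z) :
    LeftInverse (fderiv 𝕜 f (g z)) (fderiv 𝕜 g z) := by
  have hcomp : HasFDerivAt (f ∘ g) ((fderiv 𝕜 f (g z)).comp (fderiv 𝕜 g z)) z :=
    hf.hasFDerivAt.comp z hg.hasFDerivAt
  rw [hfg.comp_eq_id] at hcomp
  intro v
  exact congrArg (· v) ((hasFDerivAt_id z).unique hcomp).symm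

theorem injective_fderiv_of_leftInverse (hfg : LeftInverse f g) (hf : Differentiable 𝕜 f)
    (hg : Differentiable 𝕜 g) (z : F) : Injective (fderiv 𝕜 g z) :=
  (leftInverse_fderiv_of_leftInverse hfg (hf (g z)) (hg z)).injective

theorem apply_add_fderiv_fderiv_sub {φ : E → F} {ψ : F → E} (hli : LeftInverse ψ φ)
    (hri : RightInverse ψ φ) {x : E} (hφ : DifferentiableAt 𝕜 φ x)
    (hψ : DifferentiableAt 𝕜 ψ (φ x)) (y : E) :
    ψ (φ x + fderiv 𝕜 φ x (fderiv 𝕜 ψ (φ x) (φ y - φ x))) = y := by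
  have hinv := leftInverse_fderiv_of_leftInverse hri (z := φ x) (by rwa [hli x]) hψ
  rw [hli x] at hinv
  rw [hinv, add_sub_cancel, hli]

end Inverse

section ArcLength

variable {E F : Type*} [NormedAddCommGroup E] [NormedSpace ℝ E]
  [NormedAddCommGroup F] [NormedSpace ℝ F] {ψ : F → E}

theorem deriv_comp_lineMap (hψ : Differentiable ℝ ψ) (a b : F) (t : ℝ) :
    deriv (fun s : ℝ => ψ ((1 - s) • a + s • b)) t = fderiv ℝ ψ (lineMap a b t) (b - a) := by
  simp only [← lineMap_apply_module]
  exact ((hψ _).hasFDerivAt.comp_hasDerivAt t hasDerivAt_lineMap).deriv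

theorem integral_norm_deriv_comp_lineMap_pos (hψ : ContDiff ℝ 1 ψ)
    (hinj : ∀ z, Injective (fderiv ℝ ψ z)) {a b : F} (hab : a ≠ b) :
    0 < ∫ s in (0 : ℝ)..1, ‖deriv (fun t : ℝ => ψ ((1 - t) • a + t • b)) s‖ := by
  have hψd := hψ.differentiable one_ne_zero
  simp only [deriv_comp_lineMap hψd]
  have hcont : Continuous fun s : ℝ => ‖fderiv ℝ ψ (lineMap a b s) (b - a)‖ :=
    (((hψ.continuous_fderiv one_ne_zero).comp lineMap_continuous).clm_apply
      continuous_const).norm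
  refine intervalIntegral.intervalIntegral_pos_of_pos_on (hcont.intervalIntegrable 0 1)
    (fun s _ => norm_pos_iff.mpr ?_) zero_lt_one
  rw [ne_eq, map_eq_zero_iff _ (hinj _), sub_eq_zero]
  exact hab.symm

end ArcLength

/-- For a C¹ diffeomorphism `φ` (with C¹ inverse `ψ`) and `x ≠ y`, with
pullback geodesic `γ = γ^φ_{x,y}`, arc length `L = ∫₀¹ ‖γ'(s)‖₂ ds` and iso-logarithm
`w = (L/‖log^φ_x(y)‖₂) • log^φ_x(y)`, the scaling factor `α = ‖log^φ_x(y)‖₂/L`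
satisfies the iso-exponential criterion: `exp^φ_x(α • w) = y` and the ℓ² arc length of
the pullback geodesic from `x` to `exp^φ_x(α • w)` equals `‖w‖₂` (so the
iso-exponential inverts the iso-logarithm). -/
theorem isoExp_inverts_isoLog
    (d : ℕ) (φ ψ : EuclideanSpace ℝ (Fin d) → EuclideanSpace ℝ (Fin d))
    (hφ : ContDiff ℝ 1 φ) (hψ : ContDiff ℝ 1 ψ)
    (hli : Function.LeftInverse ψ φ) (hri : Function.RightInverse ψ φ)
    (x y : EuclideanSpace ℝ (Fin d)) (hxy : x ≠ y)
    (geo : EuclideanSpace ℝ (Fin d) → EuclideanSpace ℝ (Fin d) → ℝ →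
      EuclideanSpace ℝ (Fin d))
    (hgeo : geo = fun a b t => ψ ((1 - t) • φ a + t • φ b))
    (logxy : EuclideanSpace ℝ (Fin d))
    (hlog : logxy = fderiv ℝ ψ (φ x) (φ y - φ x))
    (L : ℝ) (hL : L = ∫ s in (0:ℝ)..1, ‖deriv (geo x y) s‖)
    (w : EuclideanSpace ℝ (Fin d)) (hw : w = (L / ‖logxy‖) • logxy)
    (α : ℝ) (hα : α = ‖logxy‖ / L)
    (expφ : EuclideanSpace ℝ (Fin d) → EuclideanSpace ℝ (Fin d))
    (hexp : expφ = fun v => ψ (φ x + fderiv ℝ φ x v)) :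
    expφ (α • w) = y ∧
    (∫ s in (0:ℝ)..1, ‖deriv (geo x (expφ (α • w))) s‖) = ‖w‖ := by
  have hφd := hφ.differentiable one_ne_zero
  have hψd := hψ.differentiable one_ne_zero
  have hinj := injective_fderiv_of_leftInverse hri hφd hψd
  have hφxy : φ x ≠ φ y := hli.injective.ne hxy
  have hlog_ne : ‖logxy‖ ≠ 0 := by
    rw [hlog, norm_ne_zero_iff, ne_eq, map_eq_zero_iff _ (hinj _), sub_eq_zero]
    exact hφxy.symm
  have hL_pos : 0 < L := hL ▸ hgeo ▸ integral_norm_deriv_comp_lineMap_pos hψ hinj hφxy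
  have hαw : α • w = logxy := by
    rw [hα, hw, smul_smul, div_mul_div_cancel₀ hL_pos.ne', div_self hlog_ne, one_smul]
  have hexp_log : expφ (α • w) = y := by
    rw [hαw, hexp, hlog]
    exact apply_add_fderiv_fderiv_sub hli hri (hφd x) (hψd (φ x)) y
  refine ⟨hexp_log, ?_⟩
  rw [hexp_log, ← hL, hw, norm_smul, Real.norm_of_nonneg (by positivity),
    div_mul_cancel₀ _ hlog_ne]
end

section
/- Let φ : ℝ^d → ℝ^d be a diffeomorphism such that φ and φ⁻¹ are three times continuously differentiable, let p ∈ ℝ^d, let ρ : ℝ^d → ℝ^d be a diffeomorphism of the tangent space at p that is three times continuously differentiable together with its inverse, and set G := exp^φ_p ∘ ρ, where exp^φ_p(v) := φ⁻¹(φ(p) + D_pφ[v]). Let x¹, …, x^N ∈ ℝ^d, set uⁱ := ρ⁻¹(log^φ_p(xⁱ)) with log^φ_p(y) := D_{φ(p)}φ⁻¹[φ(y) − φ(p)], and let t¹, …, t^N ∈ ℝ^d. Define Mⁱ ∈ ℝ^{d×d} by Mⁱ_{jk} := ⟨D_{uⁱ}G[e_j], D_{uⁱ}G[e_k]⟩.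 Then there exist C > 0 and δ > 0 such that whenever ε := (∑_{i=1}^N ‖uⁱ − tⁱ‖₂²)^{1/2} < δ, one has |∑_{i=1}^N ‖xⁱ − G(tⁱ)‖₂² − ∑_{i=1}^N (uⁱ − tⁱ)ᵀ Mⁱ (uⁱ − tⁱ)| ≤ C ε³. -/
/-!
Since `exp^φ_p ∘ log^φ_p = id`, the data points are `xⁱ = G(uⁱ)`, and the quadratic form of `Mⁱ`
is `w ↦ ‖D_{uⁱ}G[w]‖²`. So the `i`-th summand of the error is
`‖G(uⁱ) - G(tⁱ)‖² - ‖D_{uⁱ}G[uⁱ - tⁱ]‖²`, which the second-order Taylor bound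
`G(tⁱ) = G(uⁱ) + D_{uⁱ}G[tⁱ - uⁱ] + O(‖tⁱ - uⁱ‖²)` for the `C²` map `G` makes `O(‖uⁱ - tⁱ‖³)`;
finally every `‖uⁱ - tⁱ‖` is at most `ε`.
-/

open scoped RealInnerProductSpace
open Asymptotics Filter Topology

theorem sum_sum_mul_inner_single_mul {ι F : Type*} [Fintype ι] [DecidableEq ι]
    [NormedAddCommGroup F] [InnerProductSpace ℝ F] (A : EuclideanSpace ℝ ι →L[ℝ] F)
    (w : EuclideanSpace ℝ ι) :
    ∑ j, ∑ k, w j * ⟪A (EuclideanSpace.single j 1), A (EuclideanSpace.single k 1)⟫ * w k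
      = ‖A w‖ ^ 2 := by
  have hAw : A w = ∑ j, w j • A (EuclideanSpace.single j 1) := by
    conv_lhs => rw [← (EuclideanSpace.basisFun ι ℝ).sum_repr w]
    simp only [map_sum, map_smul, EuclideanSpace.basisFun_apply, EuclideanSpace.basisFun_repr]
  rw [← real_inner_self_eq_norm_sq, hAw, sum_inner]
  simp only [inner_sum, real_inner_smul_left, real_inner_smul_right]
  congr! 2 with j _ k _
  ring

section SecondOrder

variable {E F : Type*} [NormedAddCommGroup E] [NormedSpace ℝ E] {f : E → F} {x : E}

theorem ContDiffAt.isBigO_sub_sub_fderiv [NormedAddCommGroup F] [NormedSpace ℝ F]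
    (hf : ContDiffAt ℝ 2 f x) :
    (fun y => f y - f x - fderiv ℝ f x (y - x)) =O[𝓝 x] fun y => ‖y - x‖ ^ 2 := by
  obtain ⟨K, s, hs, hK⟩ := (hf.fderiv_right (m := 1) le_rfl).exists_lipschitzOnWith
  have hdiff : ∀ᶠ y in 𝓝 x, DifferentiableAt ℝ f y :=
    (hf.eventually (by simp)).mono fun y hy => hy.differentiableAt (by simp)
  obtain ⟨ε, hε, hball⟩ := Metric.mem_nhds_iff.1 (inter_mem hs hdiff)
  -- mean value inequality for `f - f'(x)`, whose derivative is `K‖y - x‖`-small on the ball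
  refine IsBigO.of_bound K ?_
  filter_upwards [Metric.ball_mem_nhds x hε] with y hy
  have hsub : Metric.closedBall x ‖y - x‖ ⊆ s ∩ {y | DifferentiableAt ℝ f y} :=
    (Metric.closedBall_subset_ball (mem_ball_iff_norm.1 hy)).trans hball
  have hx : x ∈ Metric.closedBall x ‖y - x‖ := Metric.mem_closedBall_self (norm_nonneg _)
  have hmvt := (convex_closedBall x ‖y - x‖).norm_image_sub_le_of_norm_hasFDerivWithin_le
    (f := fun z => f z - fderiv ℝ f x z) (f' := fun z => fderiv ℝ f z - fderiv ℝ f x)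
    (fun z hz => ((hsub hz).2.hasFDerivAt.sub (fderiv ℝ f x).hasFDerivAt).hasFDerivWithinAt)
    (fun z hz => by
      rw [← dist_eq_norm]
      exact (hK.dist_le_mul z (hsub hz).1 x (hsub hx).1).trans
        (mul_le_mul_of_nonneg_left (Metric.mem_closedBall.1 hz) K.coe_nonneg))
    hx (mem_closedBall_iff_norm.2 le_rfl)
  calc ‖f y - f x - fderiv ℝ f x (y - x)‖
      = ‖f y - fderiv ℝ f x y - (f x - fderiv ℝ f x x)‖ := by rw [map_sub]; congr 1; abel
    _ ≤ K * ‖y - x‖ * ‖y - x‖ := hmvt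
    _ = K * ‖‖y - x‖ ^ 2‖ := by rw [norm_pow, norm_norm]; ring

theorem ContDiffAt.isBigO_norm_sub_sq_sub_norm_fderiv_sq [NormedAddCommGroup F]
    [InnerProductSpace ℝ F] (hf : ContDiffAt ℝ 2 f x) :
    (fun y => ‖f x - f y‖ ^ 2 - ‖fderiv ℝ f x (x - y)‖ ^ 2) =O[𝓝 x] fun y => ‖y - x‖ ^ 3 := by
  set A := fderiv ℝ f x
  obtain ⟨c, hc, hcw⟩ := hf.isBigO_sub_sub_fderiv.exists_pos
  refine IsBigO.of_bound (2 * ‖A‖ * c + c ^ 2) ?_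
  filter_upwards [hcw.bound, Metric.closedBall_mem_nhds x one_pos] with y he hy1
  set e := f y - f x - A (y - x)
  set r := ‖y - x‖
  have hr1 : r ≤ 1 := by simpa [r, dist_eq_norm] using hy1
  have hdecomp : f x - f y = A (x - y) - e := by simp only [e, map_sub]; abel
  have hAr : ‖A (x - y)‖ ≤ ‖A‖ * r := by simpa [r, norm_sub_rev] using A.le_opNorm (x - y)
  have he' : ‖e‖ ≤ c * r ^ 2 := by simpa using he
  have hinner : |⟪A (x - y), e⟫| ≤ ‖A‖ * c * r ^ 3 :=
    calc |⟪A (x - y), e⟫| ≤ ‖A (x - y)‖ * ‖e‖ := abs_real_inner_le_norm _ _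
      _ ≤ (‖A‖ * r) * (c * r ^ 2) := by gcongr
      _ = ‖A‖ * c * r ^ 3 := by ring
  have he2 : ‖e‖ ^ 2 ≤ c ^ 2 * r ^ 3 :=
    calc ‖e‖ ^ 2 ≤ (c * r ^ 2) ^ 2 := by gcongr
      _ = c ^ 2 * r ^ 3 * r := by ring
      _ ≤ c ^ 2 * r ^ 3 := mul_le_of_le_one_right (by positivity) hr1
  rw [hdecomp, norm_sub_sq_real, Real.norm_eq_abs, norm_pow, norm_norm]
  calc |‖A (x - y)‖ ^ 2 - 2 * ⟪A (x - y), e⟫ + ‖e‖ ^ 2 - ‖A (x - y)‖ ^ 2|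
      = |‖e‖ ^ 2 - 2 * ⟪A (x - y), e⟫| := by ring_nf
    _ ≤ ‖e‖ ^ 2 + 2 * |⟪A (x - y), e⟫| := by
      refine (abs_sub _ _).trans ?_
      rw [abs_of_nonneg (by positivity), abs_mul, abs_two]
    _ ≤ (2 * ‖A‖ * c + c ^ 2) * r ^ 3 := by nlinarith

end SecondOrder

theorem pi_norm_le_sqrt_sum_norm_sq {ι E : Type*} [Fintype ι] [SeminormedAddCommGroup E]
    (f : ι → E) : ‖f‖ ≤ √(∑ i, ‖f i‖ ^ 2) :=
  (pi_norm_le_iff_of_nonneg (Real.sqrt_nonneg _)).2 fun i =>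
    Real.le_sqrt_of_sq_le (Finset.single_le_sum (fun j _ => sq_nonneg ‖f j‖) (Finset.mem_univ i))

theorem Function.RightInverse.fderiv_apply_fderiv {E F : Type*} [NormedAddCommGroup E]
    [NormedSpace ℝ E] [NormedAddCommGroup F] [NormedSpace ℝ F] {φ : E → F} {ψ : F → E}
    (h : Function.RightInverse ψ φ) {y : F} (hφ : DifferentiableAt ℝ φ (ψ y))
    (hψ : DifferentiableAt ℝ ψ y) (v : F) : fderiv ℝ φ (ψ y) (fderiv ℝ ψ y v) = v := by
  have hcomp := fderiv_comp y hφ hψ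
  rw [h.comp_eq_id, fderiv_id] at hcomp
  exact (DFunLike.congr_fun hcomp v).symm

theorem pullback_exp_log {E : Type*} [NormedAddCommGroup E] [NormedSpace ℝ E] {φ ψ : E → E}
    (hli : Function.LeftInverse ψ φ) (hri : Function.RightInverse ψ φ) {p : E}
    (hφ : DifferentiableAt ℝ φ p) (hψ : DifferentiableAt ℝ ψ (φ p)) (y : E) :
    ψ (φ p + fderiv ℝ φ p (fderiv ℝ ψ (φ p) (φ y - φ p))) = y := by
  have hinv := hri.fderiv_apply_fderiv (y := φ p) (by rwa [hli p]) hψ (φ y - φ p)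
  rw [hli p] at hinv
  rw [hinv, add_sub_cancel, hli]

theorem global_approximation_error_general
    (d N : ℕ)
    (φ ψ : EuclideanSpace ℝ (Fin d) → EuclideanSpace ℝ (Fin d))
    (hφ : ContDiff ℝ 3 φ) (hψ : ContDiff ℝ 3 ψ)
    (hli : Function.LeftInverse ψ φ) (hri : Function.RightInverse ψ φ)
    (p : EuclideanSpace ℝ (Fin d))
    (ρ ρinv : EuclideanSpace ℝ (Fin d) → EuclideanSpace ℝ (Fin d))
    (hρ : ContDiff ℝ 3 ρ)
    (hρri : Function.RightInverse ρinv ρ)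
    (G : EuclideanSpace ℝ (Fin d) → EuclideanSpace ℝ (Fin d))
    (hG : G = fun v => ψ (φ p + fderiv ℝ φ p (ρ v)))
    (x : Fin N → EuclideanSpace ℝ (Fin d))
    (u : Fin N → EuclideanSpace ℝ (Fin d))
    (hu : ∀ i, u i = ρinv (fderiv ℝ ψ (φ p) (φ (x i) - φ p)))
    (M : Fin N → Matrix (Fin d) (Fin d) ℝ)
    (hM : ∀ i j k, M i j k =
      ⟪fderiv ℝ G (u i) (EuclideanSpace.single j 1),
       fderiv ℝ G (u i) (EuclideanSpace.single k 1)⟫) :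
    ∃ C > 0, ∃ δ > 0, ∀ t : Fin N → EuclideanSpace ℝ (Fin d),
      Real.sqrt (∑ i, ‖u i - t i‖ ^ 2) < δ →
      |(∑ i, ‖x i - G (t i)‖ ^ 2) -
          ∑ i, ∑ j, ∑ k, (u i - t i) j * M i j k * (u i - t i) k|
        ≤ C * Real.sqrt (∑ i, ‖u i - t i‖ ^ 2) ^ 3 := by
  have hG2 : ContDiff ℝ 2 G := by
    rw [hG]
    exact (hψ.comp (contDiff_const.add ((fderiv ℝ φ p).contDiff.comp hρ))).of_le (by norm_num)
  have hGu : ∀ i, G (u i) = x i := fun i => by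
    rw [hG, hu i]
    beta_reduce
    rw [hρri]
    exact pullback_exp_log hli hri (hφ.differentiable (by norm_num) p)
      (hψ.differentiable (by norm_num) _) (x i)
  have hremainder : (fun t : Fin N → EuclideanSpace ℝ (Fin d) =>
      ∑ i, (‖G (u i) - G (t i)‖ ^ 2 - ‖fderiv ℝ G (u i) (u i - t i)‖ ^ 2))
        =O[𝓝 u] fun t => ‖t - u‖ ^ 3 :=
    IsBigO.fun_sum fun i _ =>
      ((hG2.contDiffAt.isBigO_norm_sub_sq_sub_norm_fderiv_sq).comp_tendsto
        ((continuous_apply i).tendsto u)).trans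
      (isBigO_of_le _ fun t => by
        simp only [Function.comp_apply, norm_pow, norm_norm]
        exact pow_le_pow_left₀ (norm_nonneg _) (norm_le_pi_norm (t - u) i) 3)
  obtain ⟨C, hC, hCw⟩ := hremainder.exists_pos
  obtain ⟨δ, hδ, hbound⟩ := Metric.eventually_nhds_iff.1 hCw.bound
  refine ⟨C, hC, δ, hδ, fun t ht => ?_⟩
  have hdist : ‖t - u‖ ≤ √(∑ i, ‖u i - t i‖ ^ 2) := by
    rw [norm_sub_rev]; exact pi_norm_le_sqrt_sum_norm_sq (u - t)
  have hC3 := hbound (y := t) (by rw [dist_eq_norm]; exact hdist.trans_lt ht)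
  simp only [hGu, Real.norm_eq_abs, abs_pow, abs_norm] at hC3
  simp only [hM, sum_sum_mul_inner_single_mul, ← Finset.sum_sub_distrib]
  exact hC3.trans (by gcongr)

/-- Let `φ` be a C³ diffeomorphism of `ℝ^d` (with C³ inverse `ψ`),
`p ∈ ℝ^d`, `ρ` a C³ diffeomorphism of the tangent space (with C³ inverse `ρinv`),
and `G := exp^φ_p ∘ ρ` with `exp^φ_p(v) = φ⁻¹(φ(p) + D_pφ[v])`. For data points
`x¹,…,x^N`, `uⁱ := ρ⁻¹(log^φ_p(xⁱ))` with `log^φ_p(y) = D_{φ(p)}φ⁻¹[φ(y) − φ(p)]`,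
and matrices `Mⁱ_{jk} := ⟨D_{uⁱ}G[e_j], D_{uⁱ}G[e_k]⟩`, the global approximation
error equals the sum of quadratic forms in the tangent-space errors up to a
third-order remainder in `ε = (∑ᵢ ‖uⁱ − tⁱ‖₂²)^{1/2}`. -/
theorem global_approximation_error
    (d N : ℕ)
    (φ ψ : EuclideanSpace ℝ (Fin d) → EuclideanSpace ℝ (Fin d))
    (hφ : ContDiff ℝ 3 φ) (hψ : ContDiff ℝ 3 ψ)
    (hli : Function.LeftInverse ψ φ) (hri : Function.RightInverse ψ φ)
    (p : EuclideanSpace ℝ (Fin d))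
    (ρ ρinv : EuclideanSpace ℝ (Fin d) → EuclideanSpace ℝ (Fin d))
    (hρ : ContDiff ℝ 3 ρ) (hρinv : ContDiff ℝ 3 ρinv)
    (hρli : Function.LeftInverse ρinv ρ) (hρri : Function.RightInverse ρinv ρ)
    (G : EuclideanSpace ℝ (Fin d) → EuclideanSpace ℝ (Fin d))
    (hG : G = fun v => ψ (φ p + fderiv ℝ φ p (ρ v)))
    (x : Fin N → EuclideanSpace ℝ (Fin d))
    (u : Fin N → EuclideanSpace ℝ (Fin d))
    (hu : ∀ i, u i = ρinv (fderiv ℝ ψ (φ p) (φ (x i) - φ p)))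
    (M : Fin N → Matrix (Fin d) (Fin d) ℝ)
    (hM : ∀ i j k, M i j k =
      ⟪fderiv ℝ G (u i) (EuclideanSpace.single j 1),
       fderiv ℝ G (u i) (EuclideanSpace.single k 1)⟫) :
    ∃ C > 0, ∃ δ > 0, ∀ t : Fin N → EuclideanSpace ℝ (Fin d),
      Real.sqrt (∑ i, ‖u i - t i‖ ^ 2) < δ →
      |(∑ i, ‖x i - G (t i)‖ ^ 2) -
          ∑ i, ∑ j, ∑ k, (u i - t i) j * M i j k * (u i - t i) k|
        ≤ C * Real.sqrt (∑ i, ‖u i - t i‖ ^ 2) ^ 3 :=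
  global_approximation_error_general d N φ ψ hφ hψ hli hri p ρ ρinv hρ hρri G hG x u hu M hM
end
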